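/- Let $\Omega\subset\mathbb{R}^n$ be a bounded domain, $a\in (W^{1,\infty}(\Omega))^{n\times n}$ symmetric, $u_0\in W^{2,\infty}(\Omega)$, $d\in C^2(\overline\Omega)$ with $d>0$ on $\overline\Omega$, and $\varphi_0(x)=e^{\lambda d(x)}$ for fixed $\lambda>0$. Define the first-order operator $\mathcal{L}_0 g = \mathrm{div}(g\, a\nabla u_0) = a\nabla u_0\cdot\nabla g + \mathrm{div}(a\nabla u_0)\, g$. Assume there exists $\kappa_2>0$ with $|a\nabla u_0\cdot\nabla d|\ge\kappa_2$ a.e. in $\Omega$. Then there exist constants $C>0$ and $s_3>0$ such that $s^2\int_\Omega |g|^2 e^{2s\varphi_0}\,dx \le C\int_\Omega |\mathcal{L}_0 g|^2 e^{2s\varphi_0}\,dx$ for all $s\ge s_3$ and all $g\in H_0^1(\Omega)$. -/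

import Mathlib

open MeasureTheory Real

/-- The `i`-th partial derivative of `f` at `x`. -/
noncomputable def pd {n : ℕ} (f : EuclideanSpace ℝ (Fin n) → ℝ) (i : Fin n)
    (x : EuclideanSpace ℝ (Fin n)) : ℝ :=
  fderiv ℝ f x (EuclideanSpace.single i 1)

/-- The first-order transport operator `L₀ g = div(g a ∇u₀)`. -/
noncomputable def L0op {n : ℕ}
    (a : EuclideanSpace ℝ (Fin n) → Fin n → Fin n → ℝ)
    (u0 g : EuclideanSpace ℝ (Fin n) → ℝ) (x : EuclideanSpace ℝ (Fin n)) : ℝ :=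
  ∑ i, pd (fun y => g y * ∑ j, a y i j * pd u0 j y) i x

/-!
Write `w = e^{sφ} g` and `P = b · ∇φ`. Conjugating by the weight turns `e^{sφ} div(g b)` into
`div(w b) - s P w`, so `|div(g b)|² e^{2sφ} ≥ s² P² w² - 2 s P w div(w b)`. The cross term
`2 P w div(w b)` equals `div(w² P b) + R w²` with `R = 2 P div b - div(P b)`, and the divergence
integrates to zero. Hence `∫ |div(g b)|² e^{2sφ} ≥ ∫ (s² P² - s R) w²`, where `R` is bounded on
the compact set `Ω̄`, while for `φ = e^{λd}` the non-degeneracy gives `P² ≥ λ² κ₂²`: the `s²`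
term wins once `s` is large.
-/

open Filter Topology

section Calculus

variable {n : ℕ}

noncomputable def divergence (F : Fin n → EuclideanSpace ℝ (Fin n) → ℝ)
    (x : EuclideanSpace ℝ (Fin n)) : ℝ :=
  ∑ i, pd (F i) i x

noncomputable def derivAlong (F : Fin n → EuclideanSpace ℝ (Fin n) → ℝ)
    (f : EuclideanSpace ℝ (Fin n) → ℝ) (x : EuclideanSpace ℝ (Fin n)) : ℝ :=
  ∑ i, F i x * pd f i x

variable {f h : EuclideanSpace ℝ (Fin n) → ℝ} {F : Fin n → EuclideanSpace ℝ (Fin n) → ℝ}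
  {x : EuclideanSpace ℝ (Fin n)}

lemma continuous_pd (hf : ContDiff ℝ 1 f) (i : Fin n) : Continuous (pd f i) :=
  (hf.continuous_fderiv one_ne_zero).clm_apply continuous_const

lemma contDiff_pd (hf : ContDiff ℝ 2 f) (i : Fin n) : ContDiff ℝ 1 (pd f i) :=
  (hf.fderiv_right (by norm_num)).clm_apply contDiff_const

lemma pd_mul (hf : DifferentiableAt ℝ f x) (hh : DifferentiableAt ℝ h x) (i : Fin n) :
    pd (fun y => f y * h y) i x = pd f i x * h x + f x * pd h i x := by
  simp only [pd, fderiv_fun_mul hf hh, add_apply, smul_apply, smul_eq_mul]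
  ring

lemma pd_exp_const_mul (hf : DifferentiableAt ℝ f x) (c : ℝ) (i : Fin n) :
    pd (fun y => exp (c * f y)) i x = c * exp (c * f x) * pd f i x := by
  simp only [pd, ((hf.hasFDerivAt.const_mul c).exp).fderiv, smul_apply, smul_eq_mul]
  ring

lemma pd_eq_zero_of_eventuallyEq_zero (hf : f =ᶠ[𝓝 x] 0) (i : Fin n) : pd f i x = 0 := by
  simp [pd, hf.fderiv_eq]

lemma continuous_divergence (hF : ∀ i, ContDiff ℝ 1 (F i)) : Continuous (divergence F) :=
  continuous_finsetSum _ fun i _ => continuous_pd (hF i) i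

lemma contDiff_derivAlong (hF : ∀ i, ContDiff ℝ 1 (F i)) (hf : ContDiff ℝ 2 f) :
    ContDiff ℝ 1 (derivAlong F f) :=
  ContDiff.sum fun i _ => (hF i).mul (contDiff_pd hf i)

lemma divergence_eq_zero_of_notMem_tsupport {g : EuclideanSpace ℝ (Fin n) → ℝ}
    (hx : x ∉ tsupport g) (hF : ∀ i y, g y = 0 → F i y = 0) : divergence F x = 0 := by
  have hg : g =ᶠ[𝓝 x] 0 := notMem_tsupport_iff_eventuallyEq.mp hx
  exact Finset.sum_eq_zero fun i _ => pd_eq_zero_of_eventuallyEq_zero (hg.mono (hF i)) i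

lemma divergence_mul (hh : DifferentiableAt ℝ h x) (hF : ∀ i, DifferentiableAt ℝ (F i) x) :
    divergence (fun i y => h y * F i y) x = derivAlong F h x + h x * divergence F x := by
  simp only [divergence, derivAlong, pd_mul hh (hF _), Finset.sum_add_distrib, Finset.mul_sum]
  congr 1
  exact Finset.sum_congr rfl fun i _ => mul_comm _ _

lemma derivAlong_exp_const_mul (hf : DifferentiableAt ℝ f x) (c : ℝ) :
    derivAlong F (fun y => exp (c * f y)) x = c * exp (c * f x) * derivAlong F f x := by
  simp only [derivAlong, pd_exp_const_mul hf, Finset.mul_sum]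
  exact Finset.sum_congr rfl fun i _ => by ring

lemma derivAlong_sq (hf : DifferentiableAt ℝ f x) :
    derivAlong F (fun y => f y ^ 2) x = 2 * f x * derivAlong F f x := by
  simp only [sq, derivAlong, pd_mul hf hf, Finset.mul_sum]
  exact Finset.sum_congr rfl fun i _ => by ring

lemma derivAlong_mul_left (p : EuclideanSpace ℝ (Fin n) → ℝ) :
    derivAlong (fun i y => p y * F i y) f x = p x * derivAlong F f x := by
  simp only [derivAlong, Finset.mul_sum]
  exact Finset.sum_congr rfl fun i _ => by ring

lemma hasCompactSupport_pd (hfc : HasCompactSupport f) (i : Fin n) :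
    HasCompactSupport (pd f i) :=
  (hfc.fderiv ℝ).comp_left
    (g := fun L : EuclideanSpace ℝ (Fin n) →L[ℝ] ℝ => L (EuclideanSpace.single i 1)) rfl

lemma integral_pd_eq_zero (hf : ContDiff ℝ 1 f) (hfc : HasCompactSupport f) (i : Fin n) :
    ∫ x, pd f i x = 0 := by
  have h : ∫ x, (1 : ℝ) * pd f i x = -∫ x, pd (fun _ => (1 : ℝ)) i x * f x := by
    apply integral_mul_fderiv_eq_neg_fderiv_mul_of_integrable
    · simp
    · exact (continuous_const.mul (continuous_pd hf i)).integrable_of_hasCompactSupport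
        (hasCompactSupport_pd hfc i).mul_left
    · exact (continuous_const.mul hf.continuous).integrable_of_hasCompactSupport hfc.mul_left
    · exact fun _ _ => differentiableAt_const 1
    · exact fun y _ => hf.differentiable one_ne_zero y
  simpa [pd] using h

lemma integral_divergence_eq_zero (hF : ∀ i, ContDiff ℝ 1 (F i))
    (hFc : ∀ i, HasCompactSupport (F i)) : ∫ x, divergence F x = 0 := by
  unfold divergence
  rw [integral_finsetSum _ fun i _ =>
    (continuous_pd (hF i) i).integrable_of_hasCompactSupport (hasCompactSupport_pd (hFc i) i)]
  exact Finset.sum_eq_zero fun i _ => integral_pd_eq_zero (hF i) (hFc i) i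

end Calculus

section Carleman

variable {n : ℕ} {b : Fin n → EuclideanSpace ℝ (Fin n) → ℝ}
  {φ g : EuclideanSpace ℝ (Fin n) → ℝ} {x : EuclideanSpace ℝ (Fin n)}

noncomputable def carlemanRemainder (b : Fin n → EuclideanSpace ℝ (Fin n) → ℝ)
    (φ : EuclideanSpace ℝ (Fin n) → ℝ) (x : EuclideanSpace ℝ (Fin n)) : ℝ :=
  2 * derivAlong b φ x * divergence b x - divergence (fun i y => derivAlong b φ y * b i y) x

lemma continuous_carlemanRemainder (hb : ∀ i, ContDiff ℝ 1 (b i)) (hφ : ContDiff ℝ 2 φ) :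
    Continuous (carlemanRemainder b φ) :=
  ((continuous_const.mul (contDiff_derivAlong hb hφ).continuous).mul
    (continuous_divergence hb)).sub
    (continuous_divergence fun i => (contDiff_derivAlong hb hφ).mul (hb i))

lemma exp_mul_divergence_mul (hφ : DifferentiableAt ℝ φ x) (hg : DifferentiableAt ℝ g x)
    (hb : ∀ i, DifferentiableAt ℝ (b i) x) (s : ℝ) :
    exp (s * φ x) * divergence (fun i y => g y * b i y) x =
      divergence (fun i y => exp (s * φ y) * g y * b i y) x
        - s * derivAlong b φ x * (exp (s * φ x) * g x) := by
  simp only [mul_assoc (exp _)]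
  rw [divergence_mul (F := fun i y => g y * b i y) (hφ.const_mul s).exp fun i => hg.mul (hb i),
    derivAlong_mul_left, derivAlong_exp_const_mul hφ]
  ring

lemma two_mul_mul_divergence_mul {p w : EuclideanSpace ℝ (Fin n) → ℝ}
    (hp : DifferentiableAt ℝ p x) (hw : DifferentiableAt ℝ w x)
    (hb : ∀ i, DifferentiableAt ℝ (b i) x) :
    2 * p x * w x * divergence (fun i y => w y * b i y) x =
      divergence (fun i y => w y ^ 2 * (p y * b i y)) x
        + (2 * p x * divergence b x - divergence (fun i y => p y * b i y) x) * w x ^ 2 := by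
  rw [divergence_mul hw hb, divergence_mul (h := fun y => w y ^ 2) (F := fun i y => p y * b i y)
    (hw.pow 2) fun i => hp.mul (hb i), derivAlong_mul_left, derivAlong_sq hw]
  ring

lemma sq_divergence_mul_mul_exp_ge (hb : ∀ i, ContDiff ℝ 1 (b i)) (hφ : ContDiff ℝ 2 φ)
    (hg : ContDiff ℝ 1 g) (s : ℝ) (x : EuclideanSpace ℝ (Fin n)) :
    (s ^ 2 * derivAlong b φ x ^ 2 - s * carlemanRemainder b φ x) * (g x ^ 2 * exp (2 * s * φ x))
        - s * divergence (fun i y => (exp (s * φ y) * g y) ^ 2 * (derivAlong b φ y * b i y)) x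
      ≤ divergence (fun i y => g y * b i y) x ^ 2 * exp (2 * s * φ x) := by
  have hφx : DifferentiableAt ℝ φ x := hφ.differentiable two_ne_zero x
  have hbx : ∀ i, DifferentiableAt ℝ (b i) x := fun i => (hb i).differentiable one_ne_zero x
  have hgx : DifferentiableAt ℝ g x := hg.differentiable one_ne_zero x
  have hconj := exp_mul_divergence_mul hφx hgx hbx s
  have hcross := two_mul_mul_divergence_mul (w := fun y => exp (s * φ y) * g y)
    ((contDiff_derivAlong hb hφ).differentiable one_ne_zero x) ((hφx.const_mul s).exp.mul hgx) hbx
  rw [carlemanRemainder]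
  set A := divergence (fun i y => exp (s * φ y) * g y * b i y) x
  set P := derivAlong b φ x
  have hexp : exp (2 * s * φ x) = exp (s * φ x) ^ 2 := by rw [← exp_nat_mul]; ring_nf
  calc _ = (s * P * (exp (s * φ x) * g x)) ^ 2 - 2 * s * P * (exp (s * φ x) * g x) * A := by
        rw [hexp]; linear_combination s * hcross
    _ ≤ (A - s * P * (exp (s * φ x) * g x)) ^ 2 := by nlinarith [sq_nonneg A]
    _ = _ := by rw [← hconj, hexp]; ring

lemma integrable_mul_sq_mul_exp {f : EuclideanSpace ℝ (Fin n) → ℝ} (hf : Continuous f)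
    (hφ : Continuous φ) (hg : Continuous g) (hgc : HasCompactSupport g) (s : ℝ) :
    Integrable fun x => f x * (g x ^ 2 * exp (2 * s * φ x)) :=
  (by fun_prop : Continuous _).integrable_of_hasCompactSupport
    (.intro hgc fun x hx => by simp [image_eq_zero_of_notMem_tsupport hx])

theorem setIntegral_sq_divergence_mul_mul_exp_ge {Ω : Set (EuclideanSpace ℝ (Fin n))}
    (hb : ∀ i, ContDiff ℝ 1 (b i)) (hφ : ContDiff ℝ 2 φ)
    (hg : ContDiff ℝ 1 g) (hgc : HasCompactSupport g) (hgΩ : tsupport g ⊆ Ω) (s : ℝ) :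
    ∫ x in Ω, (s ^ 2 * derivAlong b φ x ^ 2 - s * carlemanRemainder b φ x)
        * (g x ^ 2 * exp (2 * s * φ x)) ≤
      ∫ x in Ω, divergence (fun i y => g y * b i y) x ^ 2 * exp (2 * s * φ x) := by
  set V : Fin n → EuclideanSpace ℝ (Fin n) → ℝ :=
    fun i y => (exp (s * φ y) * g y) ^ 2 * (derivAlong b φ y * b i y)
  have hP : ContDiff ℝ 1 (derivAlong b φ) := contDiff_derivAlong hb hφ
  have hV : ∀ i, ContDiff ℝ 1 (V i) := fun i =>
    (((contDiff_const.mul (hφ.of_le one_le_two)).exp.mul hg).pow 2).mul (hP.mul (hb i))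
  have hVg : ∀ i y, g y = 0 → V i y = 0 := fun i y hy => by simp [V, hy]
  have hdiv : ∫ x in Ω, divergence V x = 0 := by
    rw [setIntegral_eq_integral_of_forall_compl_eq_zero fun x hx =>
      divergence_eq_zero_of_notMem_tsupport (fun h => hx (hgΩ h)) hVg]
    exact integral_divergence_eq_zero hV fun i =>
      .intro hgc fun y hy => hVg i y (image_eq_zero_of_notMem_tsupport hy)
  have cont_P := hP.continuous
  have cont_R := continuous_carlemanRemainder hb hφ
  have int_main := integrable_mul_sq_mul_exp (by fun_prop : Continuous fun x =>
      s ^ 2 * derivAlong b φ x ^ 2 - s * carlemanRemainder b φ x) hφ.continuous hg.continuous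
    hgc s
  have int_V : Integrable (divergence V) :=
    (continuous_divergence hV).integrable_of_hasCompactSupport
      (.intro hgc fun x hx => divergence_eq_zero_of_notMem_tsupport hx hVg)
  have int_L : Integrable fun x =>
      divergence (fun i y => g y * b i y) x ^ 2 * exp (2 * s * φ x) := by
    refine Continuous.integrable_of_hasCompactSupport ?_ (.intro hgc fun x hx => ?_)
    · have := continuous_divergence fun i => hg.mul (hb i)
      fun_prop
    · rw [divergence_eq_zero_of_notMem_tsupport (F := fun i y => g y * b i y) hx
        fun i y hy => by simp [hy]]
      simp
  calc _ = ∫ x in Ω, ((s ^ 2 * derivAlong b φ x ^ 2 - s * carlemanRemainder b φ x)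
          * (g x ^ 2 * exp (2 * s * φ x)) - s * divergence V x) := by
        rw [integral_sub int_main.integrableOn (int_V.const_mul s).integrableOn,
          integral_const_mul, hdiv, mul_zero, sub_zero]
    _ ≤ _ := integral_mono (by exact (int_main.sub (int_V.const_mul s)).integrableOn)
          int_L.integrableOn fun x => sq_divergence_mul_mul_exp_ge hb hφ hg s x

theorem carleman_divergence_mul {Ω : Set (EuclideanSpace ℝ (Fin n))} (hΩ : MeasurableSet Ω)
    (hb : ∀ i, ContDiff ℝ 1 (b i)) (hφ : ContDiff ℝ 2 φ) {K M s : ℝ} (hs : 0 ≤ s)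
    (hK : ∀ᵐ x ∂volume.restrict Ω, K ≤ derivAlong b φ x ^ 2)
    (hM : ∀ x ∈ Ω, carlemanRemainder b φ x ≤ M)
    (hg : ContDiff ℝ 1 g) (hgc : HasCompactSupport g) (hgΩ : tsupport g ⊆ Ω) :
    (s ^ 2 * K - s * M) * ∫ x in Ω, g x ^ 2 * exp (2 * s * φ x) ≤
      ∫ x in Ω, divergence (fun i y => g y * b i y) x ^ 2 * exp (2 * s * φ x) := by
  have hcoeff : ∀ᵐ x ∂volume.restrict Ω,
      (s ^ 2 * K - s * M) * (g x ^ 2 * exp (2 * s * φ x)) ≤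
        (s ^ 2 * derivAlong b φ x ^ 2 - s * carlemanRemainder b φ x)
          * (g x ^ 2 * exp (2 * s * φ x)) := by
    filter_upwards [hK, ae_restrict_mem hΩ] with x hKx hx
    have hMx := hM x hx
    gcongr
  have cont_R := continuous_carlemanRemainder hb hφ
  have cont_P := (contDiff_derivAlong hb hφ).continuous
  have integrable (f : EuclideanSpace ℝ (Fin n) → ℝ) (hf : Continuous f) :=
    (integrable_mul_sq_mul_exp hf hφ.continuous hg.continuous hgc s).integrableOn (s := Ω)
  calc _ = ∫ x in Ω, (s ^ 2 * K - s * M) * (g x ^ 2 * exp (2 * s * φ x)) :=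
        (integral_const_mul _ _).symm
    _ ≤ _ := integral_mono_ae (integrable _ continuous_const) (integrable _ (by fun_prop)) hcoeff
    _ ≤ _ := setIntegral_sq_divergence_mul_mul_exp_ge hb hφ hg hgc hgΩ s

lemma mul_sq_le_sq_derivAlong_exp {d : EuclideanSpace ℝ (Fin n) → ℝ} {lam κ : ℝ}
    (hd : DifferentiableAt ℝ d x) (hlam : 0 ≤ lam) (hdx : 0 ≤ d x) (hκ : 0 ≤ κ)
    (hbd : κ ≤ |derivAlong b d x|) :
    lam ^ 2 * κ ^ 2 ≤ derivAlong b (fun y => exp (lam * d y)) x ^ 2 := by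
  have hexp : 1 ≤ exp (lam * d x) := one_le_exp (mul_nonneg hlam hdx)
  calc lam ^ 2 * κ ^ 2 = lam ^ 2 * 1 ^ 2 * κ ^ 2 := by ring
    _ ≤ lam ^ 2 * exp (lam * d x) ^ 2 * |derivAlong b d x| ^ 2 := by gcongr
    _ = _ := by rw [derivAlong_exp_const_mul hd, sq_abs]; ring

end Carleman

theorem carleman_L0_zeroth_order_general {n : ℕ}
    (Ω : Set (EuclideanSpace ℝ (Fin n))) (hΩo : IsOpen Ω)
    (hΩb : Bornology.IsBounded Ω)
    (a : EuclideanSpace ℝ (Fin n) → Fin n → Fin n → ℝ)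
    (ha : ∀ i j, ContDiff ℝ 1 (fun x => a x i j))
    (u0 : EuclideanSpace ℝ (Fin n) → ℝ) (hu0 : ContDiff ℝ 2 u0)
    (d : EuclideanSpace ℝ (Fin n) → ℝ) (hd : ContDiff ℝ 2 d)
    (hdpos : ∀ x ∈ closure Ω, 0 < d x)
    (lam : ℝ) (hlam : 0 < lam) (κ2 : ℝ) (hκ2 : 0 < κ2)
    (hnondeg : ∀ᵐ x ∂(volume.restrict Ω),
      κ2 ≤ |∑ i, (∑ j, a x i j * pd u0 j x) * pd d i x|) :
    ∃ C > (0 : ℝ), ∃ s3 > (0 : ℝ), ∀ s ≥ s3,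
      ∀ g : EuclideanSpace ℝ (Fin n) → ℝ,
        ContDiff ℝ 1 g → HasCompactSupport g → tsupport g ⊆ Ω →
        s ^ 2 * ∫ x in Ω, g x ^ 2 * Real.exp (2 * s * Real.exp (lam * d x)) ≤
          C * ∫ x in Ω, (L0op a u0 g x) ^ 2
              * Real.exp (2 * s * Real.exp (lam * d x)) := by
  set b : Fin n → EuclideanSpace ℝ (Fin n) → ℝ := fun i x => ∑ j, a x i j * pd u0 j x
  set φ := fun x => exp (lam * d x)
  have hb : ∀ i, ContDiff ℝ 1 (b i) := fun i =>
    ContDiff.sum fun j _ => (ha i j).mul (contDiff_pd hu0 j)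
  have hφ : ContDiff ℝ 2 φ := (contDiff_const.mul hd).exp
  have hK : ∀ᵐ x ∂volume.restrict Ω, lam ^ 2 * κ2 ^ 2 ≤ derivAlong b φ x ^ 2 := by
    filter_upwards [hnondeg, ae_restrict_mem hΩo.measurableSet] with x hκx hx
    exact mul_sq_le_sq_derivAlong_exp (hd.differentiable two_ne_zero x) hlam.le
      (hdpos x (subset_closure hx)).le hκ2.le hκx
  obtain ⟨M, hM⟩ := hΩb.isCompact_closure.bddAbove_image
    (continuous_carlemanRemainder hb hφ).continuousOn
  have hK0 : 0 < lam ^ 2 * κ2 ^ 2 := by positivity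
  refine ⟨2 / (lam ^ 2 * κ2 ^ 2), by positivity, max 1 (2 * M / (lam ^ 2 * κ2 ^ 2)), by positivity,
    fun s hs g hg hgc hgΩ => ?_⟩
  have hs0 : 0 ≤ s := (zero_le_one.trans (le_max_left _ _)).trans hs
  have hsM : 2 * M ≤ s * (lam ^ 2 * κ2 ^ 2) := (div_le_iff₀ hK0).1 ((le_max_right _ _).trans hs)
  have key : (s ^ 2 * (lam ^ 2 * κ2 ^ 2) - s * M) * ∫ x in Ω, g x ^ 2 * exp (2 * s * φ x) ≤
      ∫ x in Ω, L0op a u0 g x ^ 2 * exp (2 * s * φ x) :=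
    carleman_divergence_mul hΩo.measurableSet hb hφ hs0 hK
      (fun x hx => hM ⟨x, subset_closure hx, rfl⟩) hg hgc hgΩ
  have hW : 0 ≤ ∫ x in Ω, g x ^ 2 * exp (2 * s * φ x) := integral_nonneg fun x => by positivity
  rw [div_mul_eq_mul_div, le_div_iff₀ hK0]
  nlinarith [mul_le_mul_of_nonneg_right (mul_le_mul_of_nonneg_left hsM hs0) hW]

/-- Zeroth-order Carleman estimate for `L₀ g = div(g a ∇u₀)` with weight
`φ₀ = e^{λ d}`, under the non-degeneracy `|a ∇u₀ · ∇d| ≥ κ₂` a.e. in `Ω`: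
there are `C > 0`, `s₃ > 0` with
`s² ∫_Ω g² e^{2sφ₀} ≤ C ∫_Ω |L₀ g|² e^{2sφ₀}` for all `s ≥ s₃`, `g ∈ H₀¹(Ω)`. -/
theorem carleman_L0_zeroth_order {n : ℕ}
    (Ω : Set (EuclideanSpace ℝ (Fin n))) (hΩo : IsOpen Ω)
    (hΩb : Bornology.IsBounded Ω)
    (a : EuclideanSpace ℝ (Fin n) → Fin n → Fin n → ℝ)
    (ha : ∀ i j, ContDiff ℝ 1 (fun x => a x i j))
    (hasymm : ∀ x i j, a x i j = a x j i)
    (u0 : EuclideanSpace ℝ (Fin n) → ℝ) (hu0 : ContDiff ℝ 2 u0)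
    (d : EuclideanSpace ℝ (Fin n) → ℝ) (hd : ContDiff ℝ 2 d)
    (hdpos : ∀ x ∈ closure Ω, 0 < d x)
    (lam : ℝ) (hlam : 0 < lam) (κ2 : ℝ) (hκ2 : 0 < κ2)
    (hnondeg : ∀ᵐ x ∂(volume.restrict Ω),
      κ2 ≤ |∑ i, (∑ j, a x i j * pd u0 j x) * pd d i x|) :
    ∃ C > (0 : ℝ), ∃ s3 > (0 : ℝ), ∀ s ≥ s3,
      ∀ g : EuclideanSpace ℝ (Fin n) → ℝ,
        ContDiff ℝ 1 g → HasCompactSupport g → tsupport g ⊆ Ω →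
        s ^ 2 * ∫ x in Ω, g x ^ 2 * Real.exp (2 * s * Real.exp (lam * d x)) ≤
          C * ∫ x in Ω, (L0op a u0 g x) ^ 2
              * Real.exp (2 * s * Real.exp (lam * d x)) :=
  carleman_L0_zeroth_order_general Ω hΩo hΩb a ha u0 hu0 d hd hdpos lam hlam κ2 hκ2 hnondeg
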